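/- arXiv:1511.04486 — 3 statements merged into one kernel-verified Lean document; each statement's English description precedes it below -/
import Mathlib

section
/- Let F_1⁻¹, …, F_L⁻¹ : (0,1) → ℝ be quantile functions of distributions P_1, …, P_L with pairwise integrable differences, and suppose that for every p ∈ (0,1) the scalar sequence F_1⁻¹(p), F_2⁻¹(p), …, F_L⁻¹(p) is monotone (nonincreasing or nondecreasing, possibly depending on p). Then for all indices i < j in {1,…,L}: ∫_0^1 |F_i⁻¹(p) − F_j⁻¹(p)| dp = ∑_{ℓ=i+1}^{j} ∫_0^1 |F_{ℓ−1}⁻¹(p) − F_ℓ⁻¹(p)| dp; that is, the L₁ Wasserstein distances are additive along the sequence. -/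
open MeasureTheory

/-- Telescoping sum over `Icc (i+1) j`. -/
lemma tele_sum (f : ℕ → ℝ) (i : ℕ) :
    ∀ j, i ≤ j → ∑ ℓ ∈ Finset.Icc (i + 1) j, (f ℓ - f (ℓ - 1)) = f j - f i := by
  intro j
  induction j with
  | zero => intro h; interval_cases i; simp
  | succ n ih =>
    intro h
    rcases Nat.lt_or_ge i (n + 1) with hlt | hge
    · have hin : i ≤ n := Nat.lt_succ_iff.mp hlt
      rw [Finset.sum_Icc_succ_top (by omega : i + 1 ≤ n + 1), ih hin]
      simp
    · have : i = n + 1 := le_antisymm h hge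
      subst this
      simp [Finset.Icc_eq_empty_of_lt (by omega : (n + 1 : ℕ) < n + 1 + 1)]

/-- **Additivity of L₁ Wasserstein distances along a trend** (Lemma 2 of the paper).
If `F ℓ : (0,1) → ℝ` (for `ℓ = 1, …, L`) are quantile functions with pairwise
integrable differences and, for every `p ∈ (0,1)`, the sequence `ℓ ↦ F ℓ p` is
monotone on `{1,…,L}` (nonincreasing or nondecreasing, possibly depending on `p`),
then for all `1 ≤ i < j ≤ L` the `L₁` Wasserstein distance between `P_i` and `P_j`
equals the sum of the distances between consecutive distributions. -/
theorem wasserstein_L1_additive_along_trend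
    (L : ℕ) (F : ℕ → ℝ → ℝ)
    (hint : ∀ i ∈ Finset.Icc 1 L, ∀ j ∈ Finset.Icc 1 L,
      IntegrableOn (fun p => F i p - F j p) (Set.Ioo (0:ℝ) 1))
    (hmono : ∀ p ∈ Set.Ioo (0:ℝ) 1,
      MonotoneOn (fun ℓ => F ℓ p) (Set.Icc 1 L) ∨
        AntitoneOn (fun ℓ => F ℓ p) (Set.Icc 1 L))
    (i j : ℕ) (hi : 1 ≤ i) (hij : i < j) (hj : j ≤ L) :
    ∫ p in Set.Ioo (0:ℝ) 1, |F i p - F j p| =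
      ∑ ℓ ∈ Finset.Icc (i + 1) j, ∫ p in Set.Ioo (0:ℝ) 1, |F (ℓ - 1) p - F ℓ p| := by
  -- pointwise equality on Ioo 0 1
  have hpt : ∀ p ∈ Set.Ioo (0:ℝ) 1,
      |F i p - F j p| = ∑ ℓ ∈ Finset.Icc (i + 1) j, |F (ℓ - 1) p - F ℓ p| := by
    intro p hp
    have hiL : i ∈ Set.Icc 1 L := ⟨hi, le_trans (le_of_lt hij) hj⟩
    have hjL : j ∈ Set.Icc 1 L := ⟨le_trans hi (le_of_lt hij), hj⟩
    rcases hmono p hp with hm | hm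
    · have hij' : F i p ≤ F j p := hm hiL hjL (le_of_lt hij)
      have habs : ∀ ℓ ∈ Finset.Icc (i + 1) j,
          |F (ℓ - 1) p - F ℓ p| = F ℓ p - F (ℓ - 1) p := by
        intro ℓ hℓ
        simp only [Finset.mem_Icc] at hℓ
        have h1 : (ℓ - 1 : ℕ) ∈ Set.Icc 1 L := ⟨by omega, by omega⟩
        have h2 : ℓ ∈ Set.Icc 1 L := ⟨by omega, by omega⟩
        have := hm h1 h2 (by omega)
        rw [abs_sub_comm, abs_of_nonneg (by linarith)]
      rw [Finset.sum_congr rfl habs,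
        tele_sum (fun ℓ => F ℓ p) i j (le_of_lt hij),
        abs_sub_comm, abs_of_nonneg (by linarith)]
    · have hij' : F j p ≤ F i p := hm hiL hjL (le_of_lt hij)
      have habs : ∀ ℓ ∈ Finset.Icc (i + 1) j,
          |F (ℓ - 1) p - F ℓ p| = F (ℓ - 1) p - F ℓ p := by
        intro ℓ hℓ
        simp only [Finset.mem_Icc] at hℓ
        have h1 : (ℓ - 1 : ℕ) ∈ Set.Icc 1 L := ⟨by omega, by omega⟩
        have h2 : ℓ ∈ Set.Icc 1 L := ⟨by omega, by omega⟩
        have := hm h1 h2 (by omega)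
        rw [abs_of_nonneg (by linarith)]
      have : ∑ ℓ ∈ Finset.Icc (i + 1) j, (F (ℓ - 1) p - F ℓ p)
          = -(∑ ℓ ∈ Finset.Icc (i + 1) j, (F ℓ p - F (ℓ - 1) p)) := by
        rw [← Finset.sum_neg_distrib]; congr 1; ext ℓ; ring
      rw [Finset.sum_congr rfl habs, this,
        tele_sum (fun ℓ => F ℓ p) i j (le_of_lt hij),
        abs_of_nonneg (by linarith)]
      ring
  have hmeas : MeasurableSet (Set.Ioo (0:ℝ) 1) := measurableSet_Ioo
  rw [setIntegral_congr_fun hmeas hpt]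
  apply integral_finset_sum
  intro ℓ hℓ
  simp only [Finset.mem_Icc] at hℓ
  have h1 : (ℓ - 1 : ℕ) ∈ Finset.Icc 1 L := by simp only [Finset.mem_Icc]; omega
  have h2 : ℓ ∈ Finset.Icc 1 L := by simp only [Finset.mem_Icc]; omega
  exact (hint _ h1 _ h2).abs
end

section
/- Let batches i = 1,…,N be partitioned into L levels with N_ℓ batches per level (index sets I_ℓ). For each batch i let F_i⁻¹(k/P), k = 1,…,P−1, be the true quantiles of a CDF F_i that is strictly increasing in a neighborhood of each such quantile, and let F̂_i⁻¹(k/P) be the empirical quantiles (F̂_i⁻¹(p) := inf{x : F̂_i(x) ≥ p}) computed from n i.i.d. samples from F_i. Define the level averages F̄_ℓ := (1/N_ℓ)∑_{i∈I_ℓ} F_i⁻¹(·/P) and F̂̄_ℓ := (1/N_ℓ)∑_{i∈I_ℓ} F̂_i⁻¹(·/P), viewed as vectors in ℝ^{P−1}. Then for every γ > 0: Pr(∑_{ℓ=1}^L d_W(F̂̄_ℓ, F̄_ℓ)² > γ) ≤ 2·N_ℓ·P·L·exp(−2n·R(√(γ/L))²), where R(γ') := min over i and k of min{F_i(F_i⁻¹(k/P)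 + γ') − k/P, k/P − F_i(F_i⁻¹(k/P) − γ')}. -/
open MeasureTheory ProbabilityTheory

/-- Discretized squared L₂ Wasserstein distance between quantile vectors
evaluated at the grid `k/P`, `k = 1, …, P−1`. -/
noncomputable def dW2 (P : ℕ) (u v : Fin (P - 1) → ℝ) : ℝ :=
  (1 / (P : ℝ)) * ∑ k, (u k - v k) ^ 2

section aux

open Real Set
open scoped ENNReal

private lemma hoeffding_aux {q : ℝ} (hq0 : 0 ≤ q) (hq1 : q ≤ 1) (t : ℝ) :
    1 - q + q * Real.exp t ≤ Real.exp (t * q + t ^ 2 / 8) := by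
  set D : ℝ → ℝ := fun t => 1 - q + q * Real.exp t with hD
  have hDpos : ∀ t, 0 < D t := by
    intro t
    rcases lt_or_eq_of_le hq1 with h | h
    · have : 0 < 1 - q := by linarith
      have : 0 ≤ q * Real.exp t := mul_nonneg hq0 (exp_pos t).le
      simp only [hD]; linarith
    · have := exp_pos t; simp only [hD, ← h]; nlinarith
  set g : ℝ → ℝ := fun t => t * q + t ^ 2 / 8 - Real.log (D t) with hg
  set g' : ℝ → ℝ := fun t => q + t / 4 - q * Real.exp t / D t with hg'
  have hDderiv : ∀ t, HasDerivAt D (q * Real.exp t) t := by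
    intro t
    exact ((Real.hasDerivAt_exp t).const_mul q).const_add (1 - q)
  have hgderiv : ∀ t, HasDerivAt g (g' t) t := by
    intro t
    have hlog : HasDerivAt (fun t => Real.log (D t)) (q * Real.exp t / D t) t :=
      (hDderiv t).log (hDpos t).ne'
    have h1 : HasDerivAt (fun t : ℝ => t * q + t ^ 2 / 8) (q + t / 4) t := by
      have := ((hasDerivAt_id t).mul_const q).add
        (((hasDerivAt_pow 2 t)).div_const 8)
      refine this.congr_deriv ?_
      ring
    exact h1.sub hlog
  have hg'deriv : ∀ t, HasDerivAt g'
      (1 / 4 - (q * Real.exp t / D t) * (1 - q * Real.exp t / D t)) t := by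
    intro t
    have hdiv : HasDerivAt (fun t => q * Real.exp t / D t)
        ((q * Real.exp t * D t - q * Real.exp t * (q * Real.exp t)) / (D t) ^ 2) t := by
      have := ((Real.hasDerivAt_exp t).const_mul q).div (hDderiv t) (hDpos t).ne'
      exact this
    have h1 : HasDerivAt (fun t : ℝ => q + t / 4) (1 / 4) t := by
      simpa using ((hasDerivAt_id t).div_const 4).const_add q
    have := h1.sub hdiv
    refine this.congr_deriv ?_
    have hDne : (1 - q + q * Real.exp t) ≠ 0 := by
      have := hDpos t; simp only [hD] at this; linarith
    simp only [hD]
    field_simp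
  have hg'deriv_nonneg : ∀ t, 0 ≤ 1 / 4 - (q * Real.exp t / D t) * (1 - q * Real.exp t / D t) := by
    intro t
    set u := q * Real.exp t / D t
    nlinarith [sq_nonneg (u - 1/2)]
  have hg'mono : Monotone g' := by
    have hdiff : Differentiable ℝ g' := fun t => (hg'deriv t).differentiableAt
    apply monotone_of_deriv_nonneg hdiff
    intro t
    rw [(hg'deriv t).deriv]
    exact hg'deriv_nonneg t
  have hg'0 : g' 0 = 0 := by
    simp only [hg', hD]
    norm_num
  have hgnonneg : ∀ t, 0 ≤ g t := by
    have hg0 : g 0 = 0 := by simp [hg, hD]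
    intro t
    rcases le_or_gt 0 t with ht | ht
    · have hmono : MonotoneOn g (Set.Ici 0) := by
        apply monotoneOn_of_deriv_nonneg (convex_Ici 0)
        · exact (Differentiable.continuous (fun t => (hgderiv t).differentiableAt)).continuousOn
        · exact fun t _ => ((hgderiv t).differentiableAt).differentiableWithinAt
        · intro x hx
          rw [(hgderiv x).deriv]
          have : (0:ℝ) ≤ x := le_of_lt (by simpa using hx)
          calc (0:ℝ) = g' 0 := hg'0.symm
            _ ≤ g' x := hg'mono this
      have := hmono (Set.self_mem_Ici) (Set.mem_Ici.mpr ht) ht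
      linarith [hg0 ▸ this]
    · have hmono : AntitoneOn g (Set.Iic 0) := by
        apply antitoneOn_of_deriv_nonpos (convex_Iic 0)
        · exact (Differentiable.continuous (fun t => (hgderiv t).differentiableAt)).continuousOn
        · exact fun t _ => ((hgderiv t).differentiableAt).differentiableWithinAt
        · intro x hx
          rw [(hgderiv x).deriv]
          have hx0 : x ≤ (0:ℝ) := le_of_lt (by simpa using hx)
          calc g' x ≤ g' 0 := hg'mono hx0
            _ = 0 := hg'0
      have := hmono (Set.mem_Iic.mpr ht.le) (Set.self_mem_Iic) ht.le
      linarith [hg0 ▸ this]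
  have h := hgnonneg t
  have hlog : Real.log (D t) ≤ t * q + t ^ 2 / 8 := by
    simp only [hg] at h; linarith
  calc D t = Real.exp (Real.log (D t)) := (Real.exp_log (hDpos t)).symm
    _ ≤ Real.exp (t * q + t ^ 2 / 8) := Real.exp_le_exp.mpr hlog


variable {Ω : Type*} [MeasurableSpace Ω] (μ : Measure Ω) [IsProbabilityMeasure μ]

private lemma indicator_mgf {W : Ω → ℝ} (hmeas : Measurable W)
    (h01 : ∀ ω, W ω = 0 ∨ W ω = 1) (t : ℝ) :
    mgf W μ t = 1 - (∫ ω, W ω ∂μ) + (∫ ω, W ω ∂μ) * Real.exp t := by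
  have hWint : Integrable W μ := by
    refine Integrable.mono' (integrable_const 1) hmeas.aestronglyMeasurable ?_
    refine Filter.Eventually.of_forall fun ω => ?_
    rcases h01 ω with h | h <;> simp [h]
  have hrw : ∀ ω, Real.exp (t * W ω) = 1 + (Real.exp t - 1) * W ω := by
    intro ω
    rcases h01 ω with h | h <;> simp [h]
  calc mgf W μ t = ∫ ω, Real.exp (t * W ω) ∂μ := rfl
    _ = ∫ ω, (1 + (Real.exp t - 1) * W ω) ∂μ := by
        exact integral_congr_ae (Filter.Eventually.of_forall hrw)
    _ = 1 + (Real.exp t - 1) * (∫ ω, W ω ∂μ) := by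
        rw [integral_add (integrable_const 1) (hWint.const_mul _), integral_const,
          integral_const_mul]
        simp
    _ = 1 - (∫ ω, W ω ∂μ) + (∫ ω, W ω ∂μ) * Real.exp t := by ring

private lemma exp_mul_integrable {W : Ω → ℝ} (hmeas : Measurable W)
    (h01 : ∀ ω, W ω = 0 ∨ W ω = 1) (t : ℝ) :
    Integrable (fun ω => Real.exp (t * W ω)) μ := by
  refine Integrable.mono' (integrable_const (max 1 (Real.exp t)))
    ((hmeas.const_mul t).exp.aestronglyMeasurable) ?_
  refine Filter.Eventually.of_forall fun ω => ?_
  rw [Real.norm_eq_abs, abs_of_pos (Real.exp_pos _)]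
  rcases h01 ω with h | h <;> simp [h]

/-- Hoeffding upper tail for i.i.d. indicator variables. -/
private lemma hoeffding_upper {n : ℕ} {W : Fin n → Ω → ℝ}
    (hmeas : ∀ s, Measurable (W s))
    (hindep : iIndepFun W μ)
    (h01 : ∀ s ω, W s ω = 0 ∨ W s ω = 1)
    {q : ℝ} (hq0 : 0 ≤ q) (hq1 : q ≤ 1) (hq : ∀ s, (∫ ω, W s ω ∂μ) = q)
    {c : ℝ} (hc : 0 ≤ c) :
    μ {ω | (n : ℝ) * (q + c) ≤ ∑ s, W s ω} ≤
      ENNReal.ofReal (Real.exp (-2 * n * c ^ 2)) := by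
  set t : ℝ := 4 * c with ht
  have ht0 : 0 ≤ t := by positivity
  have h_int : ∀ s : Fin n, s ∈ Finset.univ →
      Integrable (fun ω => Real.exp (t * W s ω)) μ :=
    fun s _ => exp_mul_integrable μ (hmeas s) (h01 s) t
  have h_int_sum : Integrable (fun ω => Real.exp (t * (∑ s, W s) ω)) μ :=
    hindep.integrable_exp_mul_sum hmeas h_int
  have hchernoff := measure_ge_le_exp_mul_mgf (X := ∑ s, W s) (μ := μ)
    ((n : ℝ) * (q + c)) ht0 h_int_sum
  have hmgf : mgf (∑ s, W s) μ t = (1 - q + q * Real.exp t) ^ n := by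
    rw [hindep.mgf_sum hmeas]
    have : ∀ s : Fin n, mgf (W s) μ t = 1 - q + q * Real.exp t := by
      intro s
      rw [indicator_mgf μ (hmeas s) (h01 s) t, hq s]
    rw [Finset.prod_congr rfl (fun s _ => this s)]
    simp
  have hbase_nonneg : 0 ≤ 1 - q + q * Real.exp t := by nlinarith [Real.exp_pos t]
  have hpow : (1 - q + q * Real.exp t) ^ n ≤ Real.exp ((n : ℝ) * (t * q + t ^ 2 / 8)) := by
    calc (1 - q + q * Real.exp t) ^ n ≤ (Real.exp (t * q + t ^ 2 / 8)) ^ n :=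
          pow_le_pow_left₀ hbase_nonneg (hoeffding_aux hq0 hq1 t) n
      _ = Real.exp ((n : ℝ) * (t * q + t ^ 2 / 8)) := by
          rw [← Real.exp_nat_mul]
  have hfinal : Real.exp (-t * ((n : ℝ) * (q + c))) * mgf (∑ s, W s) μ t ≤
      Real.exp (-2 * n * c ^ 2) := by
    rw [hmgf]
    calc Real.exp (-t * ((n : ℝ) * (q + c))) * (1 - q + q * Real.exp t) ^ n
        ≤ Real.exp (-t * ((n : ℝ) * (q + c))) * Real.exp ((n : ℝ) * (t * q + t ^ 2 / 8)) := by
          exact mul_le_mul_of_nonneg_left hpow (Real.exp_pos _).le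
      _ = Real.exp (-t * ((n : ℝ) * (q + c)) + (n : ℝ) * (t * q + t ^ 2 / 8)) := by
          rw [← Real.exp_add]
      _ = Real.exp (-2 * n * c ^ 2) := by
          congr 1
          rw [ht]
          ring
  have hset : {ω | (n : ℝ) * (q + c) ≤ ∑ s, W s ω} =
      {ω | (n : ℝ) * (q + c) ≤ (∑ s, W s) ω} := by
    ext ω; simp [Finset.sum_apply]
  rw [hset]
  have hne : μ {ω | (n : ℝ) * (q + c) ≤ (∑ s, W s) ω} ≠ ⊤ := measure_ne_top _ _
  rw [← ENNReal.ofReal_toReal hne]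
  exact ENNReal.ofReal_le_ofReal (hchernoff.trans hfinal)

/-- Hoeffding lower tail for i.i.d. indicator variables. -/
private lemma hoeffding_lower {n : ℕ} {W : Fin n → Ω → ℝ}
    (hmeas : ∀ s, Measurable (W s))
    (hindep : iIndepFun W μ)
    (h01 : ∀ s ω, W s ω = 0 ∨ W s ω = 1)
    {q : ℝ} (hq0 : 0 ≤ q) (hq1 : q ≤ 1) (hq : ∀ s, (∫ ω, W s ω ∂μ) = q)
    {c : ℝ} (hc : 0 ≤ c) :
    μ {ω | ∑ s, W s ω ≤ (n : ℝ) * (q - c)} ≤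
      ENNReal.ofReal (Real.exp (-2 * n * c ^ 2)) := by
  set W' : Fin n → Ω → ℝ := fun s ω => 1 - W s ω with hW'
  have hmeas' : ∀ s, Measurable (W' s) := fun s => (measurable_const.sub (hmeas s))
  have hindep' : iIndepFun W' μ := by
    have := hindep.comp (fun _ (x : ℝ) => 1 - x) (fun _ => measurable_const.sub measurable_id)
    exact this
  have h01' : ∀ s ω, W' s ω = 0 ∨ W' s ω = 1 := by
    intro s ω
    rcases h01 s ω with h | h <;> simp [hW', h]
  have hWint : ∀ s, Integrable (W s) μ := by
    intro s
    refine Integrable.mono' (integrable_const 1) (hmeas s).aestronglyMeasurable ?_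
    refine Filter.Eventually.of_forall fun ω => ?_
    rcases h01 s ω with h | h <;> simp [h]
  have hq' : ∀ s, (∫ ω, W' s ω ∂μ) = 1 - q := by
    intro s
    rw [hW']
    simp only
    rw [integral_sub (integrable_const 1) (hWint s), integral_const, hq s]
    simp
  have hset : {ω | ∑ s, W s ω ≤ (n : ℝ) * (q - c)} =
      {ω | (n : ℝ) * ((1 - q) + c) ≤ ∑ s, W' s ω} := by
    ext ω
    simp only [Set.mem_setOf_eq, hW']
    rw [Finset.sum_sub_distrib]
    simp only [Finset.sum_const, Finset.card_univ, Fintype.card_fin, nsmul_eq_mul, mul_one]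
    constructor <;> intro h <;> nlinarith
  rw [hset]
  exact hoeffding_upper μ hmeas' hindep' h01' (by linarith) (by linarith) hq' hc


private lemma cdf_facts {Ω : Type*} [MeasurableSpace Ω] (μ : Measure Ω) [IsProbabilityMeasure μ]
    {Y : Ω → ℝ} (hY : Measurable Y) {F : ℝ → ℝ}
    (hF : ∀ x, (μ {ω | Y ω ≤ x}).toReal = F x)
    {p : ℝ} (hp0 : 0 < p) (hp1 : p < 1) :
    Monotone F ∧ {x | p ≤ F x}.Nonempty ∧ BddBelow {x | p ≤ F x} ∧
      p ≤ F (sInf {x | p ≤ F x}) := by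
  set ν : Measure ℝ := μ.map Y with hν
  have : IsProbabilityMeasure ν := Measure.isProbabilityMeasure_map hY.aemeasurable
  have hFcdf : F = fun x => cdf ν x := by
    funext x
    rw [← hF x, cdf_eq_real, measureReal_def]
    congr 1
    rw [hν, Measure.map_apply hY measurableSet_Iic]
    rfl
  have hmono : Monotone F := by rw [hFcdf]; exact fun a b hab => (cdf ν).mono hab
  have hne : {x | p ≤ F x}.Nonempty := by
    have h := (tendsto_cdf_atTop ν).eventually (eventually_gt_nhds hp1)
    obtain ⟨x, hx⟩ := h.exists
    exact ⟨x, by rw [hFcdf]; exact hx.le⟩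
  have hbdd : BddBelow {x | p ≤ F x} := by
    have h := (tendsto_cdf_atBot ν).eventually (eventually_lt_nhds hp0)
    obtain ⟨x0, hx0⟩ := h.exists
    refine ⟨x0, fun y hy => ?_⟩
    by_contra hxy
    push_neg at hxy
    have h2 : F y ≤ F x0 := hmono hxy.le
    rw [hFcdf] at h2
    simp only [Set.mem_setOf_eq, hFcdf] at hy
    simp only at h2 hy
    linarith
  refine ⟨hmono, hne, hbdd, ?_⟩
  set a := sInf {x | p ≤ F x} with ha
  have hsub : {x | p ≤ F x} ⊆ Ici a := fun x hx => csInf_le hbdd hx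
  have hclos : a ∈ closure {x | p ≤ F x} := csInf_mem_closure hne hbdd
  have hcont : ContinuousWithinAt (fun x => (cdf ν) x) {x | p ≤ F x} a :=
    ((cdf ν).right_continuous a).mono hsub
  have hnebot : (nhdsWithin a {x | p ≤ F x}).NeBot :=
    mem_closure_iff_nhdsWithin_neBot.mp hclos
  have : p ≤ (fun x => (cdf ν) x) a := by
    refine ge_of_tendsto hcont ?_
    refine eventually_nhdsWithin_of_forall fun x hx => ?_
    rw [hFcdf] at hx
    exact hx
  rw [hFcdf]
  exact this


/-- Deviation bound for a single empirical quantile. -/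
private lemma batch_dev {n : ℕ} (hn : 1 ≤ n) {X : Fin n → Ω → ℝ}
    (hmeas : ∀ s, Measurable (X s))
    (hindep : iIndepFun X μ)
    {F : ℝ → ℝ} (hlaw : ∀ s x, (μ {ω | X s ω ≤ x}).toReal = F x)
    {p : ℝ} (hp0 : 0 < p) (hp1 : p < 1)
    {γ' : ℝ} (hγ' : 0 < γ')
    {r : ℝ} (hr0 : 0 ≤ r)
    (hr1 : r ≤ F (sInf {x | p ≤ F x} + γ') - p)
    (hr2 : r ≤ p - F (sInf {x | p ≤ F x} - γ'))
    (Fhat : Ω → ℝ)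
    (hFhat : ∀ ω, Fhat ω =
      sInf {x : ℝ | p ≤ (1 / (n : ℝ)) * ∑ s, if X s ω ≤ x then (1:ℝ) else 0}) :
    μ {ω | γ' < |Fhat ω - sInf {x | p ≤ F x}|} ≤
      ENNReal.ofReal (2 * Real.exp (-2 * n * r ^ 2)) := by
  have hn0 : (0:ℝ) < n := by exact_mod_cast hn
  have hfin : Nonempty (Fin n) := ⟨⟨0, hn⟩⟩
  set Finv : ℝ := sInf {x | p ≤ F x} with hFinvdef
  -- bounds on F
  have hF01 : ∀ x, 0 ≤ F x ∧ F x ≤ 1 := by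
    intro x
    rw [← hlaw ⟨0, hn⟩ x]
    refine ⟨ENNReal.toReal_nonneg, ?_⟩
    have h1 : μ {ω | X ⟨0, hn⟩ ω ≤ x} ≤ 1 := prob_le_one
    calc (μ {ω | X ⟨0, hn⟩ ω ≤ x}).toReal ≤ (1 : ℝ≥0∞).toReal :=
          ENNReal.toReal_mono (by norm_num) h1
      _ = 1 := by simp
  -- empirical set facts (pointwise)
  have hemp : ∀ ω, {x : ℝ | p ≤ (1 / (n : ℝ)) * ∑ s, if X s ω ≤ x then (1:ℝ) else 0}.Nonempty ∧
      BddBelow {x : ℝ | p ≤ (1 / (n : ℝ)) * ∑ s, if X s ω ≤ x then (1:ℝ) else 0} := by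
    intro ω
    have hunine : (Finset.univ : Finset (Fin n)).Nonempty := Finset.univ_nonempty
    constructor
    · refine ⟨Finset.univ.sup' hunine (fun s => X s ω), ?_⟩
      have hall : ∀ s, X s ω ≤ Finset.univ.sup' hunine (fun s => X s ω) :=
        fun s => Finset.le_sup' (fun s => X s ω) (Finset.mem_univ s)
      simp only [Set.mem_setOf_eq]
      have : ∀ s : Fin n, (if X s ω ≤ Finset.univ.sup' hunine (fun s => X s ω)
          then (1:ℝ) else 0) = 1 := fun s => if_pos (hall s)
      rw [Finset.sum_congr rfl (fun s _ => this s)]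
      simp only [Finset.sum_const, Finset.card_univ, Fintype.card_fin, nsmul_eq_mul, mul_one]
      rw [one_div, inv_mul_cancel₀ hn0.ne']
      exact hp1.le
    · refine ⟨Finset.univ.inf' hunine (fun s => X s ω), fun x hx => ?_⟩
      by_contra hlt
      push_neg at hlt
      have hall : ∀ s : Fin n, ¬ (X s ω ≤ x) := by
        intro s hle
        have : Finset.univ.inf' hunine (fun s => X s ω) ≤ X s ω :=
          Finset.inf'_le _ (Finset.mem_univ s)
        linarith
      simp only [Set.mem_setOf_eq] at hx
      have : ∀ s : Fin n, (if X s ω ≤ x then (1:ℝ) else 0) = 0 := fun s => if_neg (hall s)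
      rw [Finset.sum_congr rfl (fun s _ => this s)] at hx
      simp at hx
      linarith
  -- event inclusions
  set xp : ℝ := Finv + γ' with hxp
  set xm : ℝ := Finv - γ' with hxm
  set Wp : Fin n → Ω → ℝ := fun s ω => if X s ω ≤ xp then 1 else 0 with hWp
  set Wm : Fin n → Ω → ℝ := fun s ω => if X s ω ≤ xm then 1 else 0 with hWm
  have hsubp : {ω | Finv + γ' < Fhat ω} ⊆ {ω | ∑ s, Wp s ω ≤ (n : ℝ) * (F xp - r)} := by
    intro ω hω
    simp only [Set.mem_setOf_eq] at hω ⊢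
    have hnotin : ¬ p ≤ (1 / (n : ℝ)) * ∑ s, if X s ω ≤ xp then (1:ℝ) else 0 := by
      intro hmem
      have hle : Fhat ω ≤ xp := by
        rw [hFhat ω]
        exact csInf_le (hemp ω).2 hmem
      rw [hxp] at hle
      linarith
    push_neg at hnotin
    have h1 : (1 / (n : ℝ)) * ∑ s, Wp s ω < F xp - r := lt_of_lt_of_le hnotin (by linarith)
    have h2 : ∑ s, Wp s ω < (n:ℝ) * (F xp - r) := by
      have := (mul_lt_mul_iff_right₀ hn0).mpr h1
      rwa [← mul_assoc, mul_one_div, div_self hn0.ne', one_mul] at this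
    linarith
  have hsubm : {ω | Fhat ω < Finv - γ'} ⊆ {ω | (n : ℝ) * (F xm + r) ≤ ∑ s, Wm s ω} := by
    intro ω hω
    simp only [Set.mem_setOf_eq] at hω ⊢
    rw [hFhat ω] at hω
    obtain ⟨x, hxmem, hxlt0⟩ := (csInf_lt_iff (hemp ω).2 (hemp ω).1).mp hω
    have hxlt : x < xm := by rw [hxm]; exact hxlt0
    simp only [Set.mem_setOf_eq] at hxmem
    have hmono : ∑ s, (if X s ω ≤ x then (1:ℝ) else 0) ≤ ∑ s, Wm s ω := by
      refine Finset.sum_le_sum fun s _ => ?_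
      by_cases h : X s ω ≤ x
      · rw [if_pos h, hWm]
        simp only
        rw [if_pos (h.trans hxlt.le)]
      · rw [if_neg h]
        rcases le_or_gt (X s ω) xm with h2 | h2
        · simp only [hWm, if_pos h2]; norm_num
        · simp only [hWm, if_neg (not_le.mpr h2)]
          exact le_refl 0
    have hp_le : (n:ℝ) * p ≤ ∑ s, Wm s ω := by
      have h1 : (n:ℝ) * p ≤ (n:ℝ) * ((1 / (n : ℝ)) * ∑ s, if X s ω ≤ x then (1:ℝ) else 0) :=
        (mul_le_mul_iff_right₀ hn0).mpr hxmem
      rw [← mul_assoc, mul_one_div, div_self hn0.ne', one_mul] at h1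
      linarith
    have : F xm + r ≤ p := by linarith
    calc (n:ℝ) * (F xm + r) ≤ (n:ℝ) * p := (mul_le_mul_iff_right₀ hn0).mpr this
      _ ≤ _ := hp_le
  -- Hoeffding applications
  have hWpmeas : ∀ s, Measurable (Wp s) :=
    fun s => Measurable.ite (measurableSet_le (hmeas s) measurable_const)
      measurable_const measurable_const
  have hWmmeas : ∀ s, Measurable (Wm s) :=
    fun s => Measurable.ite (measurableSet_le (hmeas s) measurable_const)
      measurable_const measurable_const
  have hg : ∀ c : ℝ, Measurable (fun x : ℝ => if x ≤ c then (1:ℝ) else 0) := by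
    intro c
    exact Measurable.ite (measurableSet_le measurable_id measurable_const)
      measurable_const measurable_const
  have hWpindep : iIndepFun Wp μ :=
    hindep.comp (fun _ x => if x ≤ xp then (1:ℝ) else 0) (fun _ => hg xp)
  have hWmindep : iIndepFun Wm μ :=
    hindep.comp (fun _ x => if x ≤ xm then (1:ℝ) else 0) (fun _ => hg xm)
  have h01p : ∀ s ω, Wp s ω = 0 ∨ Wp s ω = 1 := by
    intro s ω; by_cases h : X s ω ≤ xp <;> simp [hWp, h]
  have h01m : ∀ s ω, Wm s ω = 0 ∨ Wm s ω = 1 := by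
    intro s ω; by_cases h : X s ω ≤ xm <;> simp [hWm, h]
  have hint : ∀ (c : ℝ) (s : Fin n), (∫ ω, (if X s ω ≤ c then (1:ℝ) else 0) ∂μ) = F c := by
    intro c s
    have hA : MeasurableSet {ω | X s ω ≤ c} := measurableSet_le (hmeas s) measurable_const
    have : (fun ω => if X s ω ≤ c then (1:ℝ) else 0) =
        Set.indicator {ω | X s ω ≤ c} (1 : Ω → ℝ) := by
      funext ω
      simp [Set.indicator_apply, Set.mem_setOf_eq]
    rw [this, integral_indicator_one hA, measureReal_def, hlaw s c]
  have hdevp : μ {ω | Finv + γ' < Fhat ω} ≤ ENNReal.ofReal (Real.exp (-2 * n * r ^ 2)) := by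
    refine le_trans (measure_mono hsubp) ?_
    exact hoeffding_lower μ hWpmeas hWpindep h01p (hF01 xp).1 (hF01 xp).2
      (fun s => hint xp s) hr0
  have hdevm : μ {ω | Fhat ω < Finv - γ'} ≤ ENNReal.ofReal (Real.exp (-2 * n * r ^ 2)) := by
    refine le_trans (measure_mono hsubm) ?_
    exact hoeffding_upper μ hWmmeas hWmindep h01m (hF01 xm).1 (hF01 xm).2
      (fun s => hint xm s) hr0
  -- combine
  have hsplit : {ω | γ' < |Fhat ω - Finv|} ⊆
      {ω | Finv + γ' < Fhat ω} ∪ {ω | Fhat ω < Finv - γ'} := by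
    intro ω hω
    simp only [Set.mem_setOf_eq, Set.mem_union] at hω ⊢
    rcases lt_abs.mp hω with h | h
    · left; linarith
    · right; linarith
  calc μ {ω | γ' < |Fhat ω - Finv|} ≤
      μ ({ω | Finv + γ' < Fhat ω} ∪ {ω | Fhat ω < Finv - γ'}) := measure_mono hsplit
    _ ≤ μ {ω | Finv + γ' < Fhat ω} + μ {ω | Fhat ω < Finv - γ'} := measure_union_le _ _
    _ ≤ ENNReal.ofReal (Real.exp (-2 * n * r ^ 2)) + ENNReal.ofReal (Real.exp (-2 * n * r ^ 2)) :=
        add_le_add hdevp hdevm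
    _ = ENNReal.ofReal (2 * Real.exp (-2 * n * r ^ 2)) := by
        rw [← ENNReal.ofReal_add (Real.exp_pos _).le (Real.exp_pos _).le]
        ring_nf


end aux

section main
open Real Set
open scoped ENNReal

/-- **Concentration of level-averaged empirical quantiles** (Lemma S6 of the paper).
Batches `(ℓ, j)` at level `ℓ` have distributions with CDFs `Fcdf (ℓ,j)` that are
strictly increasing near each true quantile `Finv (ℓ,j) k = Fcdf⁻¹(k/P)`, and
empirical quantiles `F̂ (ℓ,j) k` are computed via the generalized-inverse of the
empirical CDF of `n` i.i.d. samples from `Fcdf (ℓ,j)`.  Let `F̄ ℓ` and `F̂̄ ℓ` be the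
level averages of the true and empirical quantile vectors.  Then for every `γ > 0`,
`Pr(∑_ℓ d_W(F̂̄ ℓ, F̄ ℓ)² > γ) ≤ 2·Nl·P·L·exp(−2n·R(√(γ/L))²)`, where
`R(γ') = min_{i,k} min{Fcdf i (Finv i k + γ') − k/P, k/P − Fcdf i (Finv i k − γ')}`. -/
theorem level_average_empirical_quantile_concentration
    (P L Nl n : ℕ) (hP : 2 ≤ P) (hL : 1 ≤ L) (hNl : 1 ≤ Nl) (hn : 1 ≤ n)
    {Ω : Type*} [MeasurableSpace Ω] (μ : Measure Ω) [IsProbabilityMeasure μ]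
    (Fcdf : Fin L × Fin Nl → ℝ → ℝ)
    (X : Fin L × Fin Nl → Fin n → Ω → ℝ)
    (hXmeas : ∀ i s, Measurable (X i s))
    (hXindep : ∀ i, iIndepFun (fun s => X i s) μ)
    (hXlaw : ∀ i s (x : ℝ), (μ {ω | X i s ω ≤ x}).toReal = Fcdf i x)
    (Finv : Fin L × Fin Nl → Fin (P - 1) → ℝ)
    (hFinv : ∀ i k, Finv i k = sInf {x : ℝ | ((k : ℕ) + 1 : ℝ) / P ≤ Fcdf i x})
    (hstrict : ∀ i k, ∃ δ > (0:ℝ),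
      StrictMonoOn (Fcdf i) (Set.Ioo (Finv i k - δ) (Finv i k + δ)))
    (Fhat : Fin L × Fin Nl → Fin (P - 1) → Ω → ℝ)
    (hFhat : ∀ i k ω, Fhat i k ω =
      sInf {x : ℝ | ((k : ℕ) + 1 : ℝ) / P ≤
        (1 / (n : ℝ)) * ∑ s, if X i s ω ≤ x then (1:ℝ) else 0})
    (R : ℝ → ℝ)
    (hR : ∀ γ' : ℝ, IsLeast
      {r : ℝ | ∃ i k, r = min (Fcdf i (Finv i k + γ') - ((k : ℕ) + 1 : ℝ) / P)
        (((k : ℕ) + 1 : ℝ) / P - Fcdf i (Finv i k - γ'))} (R γ'))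
    (γ : ℝ) (hγ : 0 < γ) :
    μ {ω | γ < ∑ ℓ, dW2 P (fun k => (1 / (Nl : ℝ)) * ∑ j, Fhat (ℓ, j) k ω)
        (fun k => (1 / (Nl : ℝ)) * ∑ j, Finv (ℓ, j) k)} ≤
      ENNReal.ofReal
        (2 * Nl * P * L * Real.exp (-2 * n * R (Real.sqrt (γ / L)) ^ 2)) := by
  have hPpos : (0:ℝ) < P := by positivity
  have hLpos : (0:ℝ) < L := by exact_mod_cast hL
  have hNlpos : (0:ℝ) < Nl := by exact_mod_cast hNl
  have hγL : 0 < γ / L := div_pos hγ hLpos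
  set γ' : ℝ := Real.sqrt (γ / L) with hγ'def
  have hγ'pos : 0 < γ' := Real.sqrt_pos.mpr hγL
  have hγ'sq : γ' ^ 2 = γ / L := Real.sq_sqrt hγL.le
  set r : ℝ := R γ' with hrdef
  -- p bounds for each k
  have hp0 : ∀ k : Fin (P - 1), 0 < ((k : ℕ) + 1 : ℝ) / P := by
    intro k; positivity
  have hp1 : ∀ k : Fin (P - 1), ((k : ℕ) + 1 : ℝ) / P < 1 := by
    intro k
    rw [div_lt_one hPpos]
    have h1 : (k : ℕ) + 1 ≤ P - 1 := k.isLt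
    have h2 : (k : ℕ) + 1 < P := lt_of_le_of_lt h1 (Nat.sub_lt (by omega) (by omega))
    exact_mod_cast h2
  -- facts about each cdf
  have hfacts : ∀ (i : Fin L × Fin Nl) (k : Fin (P - 1)),
      Monotone (Fcdf i) ∧ {x | ((k : ℕ) + 1 : ℝ) / P ≤ Fcdf i x}.Nonempty ∧
      BddBelow {x | ((k : ℕ) + 1 : ℝ) / P ≤ Fcdf i x} ∧
      ((k : ℕ) + 1 : ℝ) / P ≤ Fcdf i (sInf {x | ((k : ℕ) + 1 : ℝ) / P ≤ Fcdf i x}) :=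
    fun i k => cdf_facts μ (hXmeas i ⟨0, hn⟩) (hXlaw i ⟨0, hn⟩) (hp0 k) (hp1 k)
  -- component nonnegativity: every element of the R-set is ≥ 0
  have helem : ∀ (i : Fin L × Fin Nl) (k : Fin (P - 1)),
      ((k : ℕ) + 1 : ℝ) / P ≤ Fcdf i (Finv i k + γ') ∧
      Fcdf i (Finv i k - γ') ≤ ((k : ℕ) + 1 : ℝ) / P := by
    intro i k
    obtain ⟨hmono, hne, hbdd, hinf⟩ := hfacts i k
    constructor
    · calc ((k : ℕ) + 1 : ℝ) / P ≤ Fcdf i (sInf {x | ((k : ℕ) + 1 : ℝ) / P ≤ Fcdf i x}) := hinf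
        _ ≤ Fcdf i (Finv i k + γ') := by
            apply hmono
            rw [hFinv i k]
            linarith
    · by_contra habs
      push_neg at habs
      have hmem : Finv i k - γ' ∈ {x | ((k : ℕ) + 1 : ℝ) / P ≤ Fcdf i x} := habs.le
      have := csInf_le hbdd hmem
      rw [← hFinv i k] at this
      linarith
  have hr0 : 0 ≤ r := by
    obtain ⟨⟨i, k, hik⟩, _⟩ := hR γ'
    rw [hrdef, hik]
    obtain ⟨h1, h2⟩ := helem i k
    exact le_min (by linarith) (by linarith)
  have hrle : ∀ (i : Fin L × Fin Nl) (k : Fin (P - 1)),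
      r ≤ Fcdf i (Finv i k + γ') - ((k : ℕ) + 1 : ℝ) / P ∧
      r ≤ ((k : ℕ) + 1 : ℝ) / P - Fcdf i (Finv i k - γ') := by
    intro i k
    have hlb := (hR γ').2 ⟨i, k, rfl⟩
    rw [← hrdef] at hlb
    exact ⟨hlb.trans (min_le_left _ _), hlb.trans (min_le_right _ _)⟩
  -- the bad events
  set B : (Fin L × Fin Nl) × Fin (P - 1) → Set Ω :=
    fun z => {ω | γ' < |Fhat z.1 z.2 ω - Finv z.1 z.2|} with hB
  -- event inclusion
  have hincl : {ω | γ < ∑ ℓ, dW2 P (fun k => (1 / (Nl : ℝ)) * ∑ j, Fhat (ℓ, j) k ω)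
      (fun k => (1 / (Nl : ℝ)) * ∑ j, Finv (ℓ, j) k)} ⊆ ⋃ z, B z := by
    intro ω hω
    simp only [Set.mem_setOf_eq] at hω
    by_contra hnot
    simp only [Set.mem_iUnion, hB, Set.mem_setOf_eq, not_exists, not_lt] at hnot
    have hterm : ∀ (ℓ : Fin L) (k : Fin (P - 1)),
        ((1 / (Nl : ℝ)) * ∑ j, Fhat (ℓ, j) k ω - (1 / (Nl : ℝ)) * ∑ j, Finv (ℓ, j) k) ^ 2
          ≤ γ / L := by
      intro ℓ k
      have habs : |(1 / (Nl : ℝ)) * ∑ j, Fhat (ℓ, j) k ω -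
          (1 / (Nl : ℝ)) * ∑ j, Finv (ℓ, j) k| ≤ γ' := by
        rw [← mul_sub, ← Finset.sum_sub_distrib, abs_mul, abs_of_pos (by positivity :
          (0:ℝ) < 1 / (Nl : ℝ))]
        have hsum : |∑ j, (Fhat (ℓ, j) k ω - Finv (ℓ, j) k)| ≤ (Nl : ℝ) * γ' := by
          calc |∑ j, (Fhat (ℓ, j) k ω - Finv (ℓ, j) k)|
              ≤ ∑ j, |Fhat (ℓ, j) k ω - Finv (ℓ, j) k| := Finset.abs_sum_le_sum_abs _ _
            _ ≤ ∑ _j : Fin Nl, γ' := Finset.sum_le_sum fun j _ => hnot ((ℓ, j), k)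
            _ = (Nl : ℝ) * γ' := by
                simp [Finset.sum_const, Finset.card_univ, nsmul_eq_mul]
        calc (1 / (Nl : ℝ)) * |∑ j, (Fhat (ℓ, j) k ω - Finv (ℓ, j) k)|
            ≤ (1 / (Nl : ℝ)) * ((Nl : ℝ) * γ') := by
              exact mul_le_mul_of_nonneg_left hsum (by positivity)
          _ = γ' := by field_simp
      calc ((1 / (Nl : ℝ)) * ∑ j, Fhat (ℓ, j) k ω - (1 / (Nl : ℝ)) * ∑ j, Finv (ℓ, j) k) ^ 2
          = |(1 / (Nl : ℝ)) * ∑ j, Fhat (ℓ, j) k ω - (1 / (Nl : ℝ)) * ∑ j, Finv (ℓ, j) k| ^ 2 :=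
            (sq_abs _).symm
        _ ≤ γ' ^ 2 := pow_le_pow_left₀ (abs_nonneg _) habs 2
        _ = γ / L := hγ'sq
    have hdw : ∀ ℓ : Fin L, dW2 P (fun k => (1 / (Nl : ℝ)) * ∑ j, Fhat (ℓ, j) k ω)
        (fun k => (1 / (Nl : ℝ)) * ∑ j, Finv (ℓ, j) k) ≤ γ / L := by
      intro ℓ
      rw [dW2]
      have hsum : ∑ k : Fin (P - 1),
          ((1 / (Nl : ℝ)) * ∑ j, Fhat (ℓ, j) k ω - (1 / (Nl : ℝ)) * ∑ j, Finv (ℓ, j) k) ^ 2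
            ≤ (P - 1 : ℕ) * (γ / L) := by
        calc _ ≤ ∑ _k : Fin (P - 1), (γ / L) := Finset.sum_le_sum fun k _ => hterm ℓ k
          _ = (P - 1 : ℕ) * (γ / L) := by
              simp [Finset.sum_const, Finset.card_univ, nsmul_eq_mul]
      have hcard : ((P - 1 : ℕ) : ℝ) ≤ (P : ℝ) := by exact_mod_cast Nat.sub_le P 1
      calc (1 / (P : ℝ)) * ∑ k : Fin (P - 1),
            ((1 / (Nl : ℝ)) * ∑ j, Fhat (ℓ, j) k ω - (1 / (Nl : ℝ)) * ∑ j, Finv (ℓ, j) k) ^ 2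
          ≤ (1 / (P : ℝ)) * ((P - 1 : ℕ) * (γ / L)) :=
            mul_le_mul_of_nonneg_left hsum (by positivity)
        _ ≤ (1 / (P : ℝ)) * ((P : ℝ) * (γ / L)) := by
            refine mul_le_mul_of_nonneg_left ?_ (by positivity)
            exact mul_le_mul_of_nonneg_right hcard hγL.le
        _ = γ / L := by field_simp
    have : ∑ ℓ, dW2 P (fun k => (1 / (Nl : ℝ)) * ∑ j, Fhat (ℓ, j) k ω)
        (fun k => (1 / (Nl : ℝ)) * ∑ j, Finv (ℓ, j) k) ≤ γ := by
      calc _ ≤ ∑ _ℓ : Fin L, (γ / L) := Finset.sum_le_sum fun ℓ _ => hdw ℓ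
        _ = (L : ℝ) * (γ / L) := by
            simp [Finset.sum_const, Finset.card_univ, nsmul_eq_mul]
        _ = γ := by field_simp
    linarith
  -- per-event bound
  have hone : ∀ z : (Fin L × Fin Nl) × Fin (P - 1),
      μ (B z) ≤ ENNReal.ofReal (2 * Real.exp (-2 * n * r ^ 2)) := by
    rintro ⟨i, k⟩
    have := batch_dev μ hn (fun s => hXmeas i s) (hXindep i) (hXlaw i)
      (hp0 k) (hp1 k) hγ'pos hr0
      (by rw [← hFinv i k]; exact (hrle i k).1)
      (by rw [← hFinv i k]; exact (hrle i k).2)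
      (fun ω => Fhat i k ω) (fun ω => hFhat i k ω)
    rw [← hFinv i k] at this
    exact this
  -- union bound
  calc μ {ω | γ < ∑ ℓ, dW2 P (fun k => (1 / (Nl : ℝ)) * ∑ j, Fhat (ℓ, j) k ω)
        (fun k => (1 / (Nl : ℝ)) * ∑ j, Finv (ℓ, j) k)}
      ≤ μ (⋃ z, B z) := measure_mono hincl
    _ ≤ ∑ z : (Fin L × Fin Nl) × Fin (P - 1), μ (B z) := measure_iUnion_fintype_le μ B
    _ ≤ ∑ _z : (Fin L × Fin Nl) × Fin (P - 1),
          ENNReal.ofReal (2 * Real.exp (-2 * n * r ^ 2)) :=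
        Finset.sum_le_sum fun z _ => hone z
    _ = (L * Nl * (P - 1) : ℕ) * ENNReal.ofReal (2 * Real.exp (-2 * n * r ^ 2)) := by
        rw [Finset.sum_const, Finset.card_univ]
        simp [Fintype.card_prod, nsmul_eq_mul]
    _ ≤ ENNReal.ofReal (2 * Nl * P * L * Real.exp (-2 * n * r ^ 2)) := by
        rw [← ENNReal.ofReal_natCast, ← ENNReal.ofReal_mul (by positivity)]
        apply ENNReal.ofReal_le_ofReal
        have hcard : ((L * Nl * (P - 1) : ℕ) : ℝ) ≤ (L : ℝ) * Nl * P := by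
          have h1 : (L * Nl * (P - 1) : ℕ) ≤ L * Nl * P := by
            exact Nat.mul_le_mul_left _ (Nat.sub_le P 1)
          calc ((L * Nl * (P - 1) : ℕ) : ℝ) ≤ ((L * Nl * P : ℕ) : ℝ) := by exact_mod_cast h1
            _ = (L : ℝ) * Nl * P := by push_cast; ring
        have hexp : (0:ℝ) < Real.exp (-2 * n * r ^ 2) := Real.exp_pos _
        nlinarith

end main
end

section
/- Let F be a CDF with density f such that f(x) = 0 for all x outside [−B, B] and f(x) ≥ c for all x ∈ [−B, B], for constants B, c > 0, and let p ∈ (0,1) be such that F is strictly increasing around F⁻¹(p). Let F̂⁻¹(p) := inf{x : F̂(x) ≥ p}, where F̂ is the empirical CDF of n i.i.d. samples from F. Then for all ε > 0: Pr(|F̂⁻¹(p) − F⁻¹(p)| > ε) ≤ 2·exp(−2nc²ε²). In particular, bounded connected support with density bounded below implies the sub-Gaussian quantile-estimation rate (assumption (A.9) implies assumption (A.10) of the paper). -/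
open MeasureTheory ProbabilityTheory

open Real in

lemma my_pinsker {p q : ℝ} (hp : 0 < p) (hpq : p < q) (hq : q < 1) :
    2*(q-p)^2 ≤ p*(Real.log p - Real.log q) + (1-p)*(Real.log (1-p) - Real.log (1-q)) := by
  set g : ℝ → ℝ := fun x => p*(Real.log p - Real.log x) + (1-p)*(Real.log (1-p) - Real.log (1-x)) - 2*(x-p)^2 with hg
  have hder : ∀ x ∈ Set.Ioo (0:ℝ) 1, HasDerivAt g (-(p/x) + (1-p)/(1-x) - 4*(x-p)) x := by
    intro x hx
    have hx0 : x ≠ 0 := ne_of_gt hx.1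
    have hx1 : (1:ℝ) - x ≠ 0 := by have := hx.2; intro h; linarith [h]
    have h1 : HasDerivAt (fun x : ℝ => Real.log x) x⁻¹ x := Real.hasDerivAt_log hx0
    have h2 : HasDerivAt (fun x : ℝ => (1:ℝ) - x) (-1) x := by
      simpa using (hasDerivAt_id x).const_sub 1
    have h3 : HasDerivAt (fun x : ℝ => Real.log (1-x)) ((1-x)⁻¹ * (-1)) x :=
      (Real.hasDerivAt_log hx1).comp x h2
    have h4 : HasDerivAt (fun x : ℝ => (x - p)^2) (2*(x-p)^1 * 1) x := by
      exact (((hasDerivAt_id x).sub_const p).pow 2)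
    have := ((((h1.const_sub (Real.log p)).const_mul p).add
        ((h3.const_sub (Real.log (1-p))).const_mul (1-p))).sub
        ((h4.const_mul 2)))
    refine this.congr_deriv ?_
    ring
  have hcont : ContinuousOn g (Set.Icc p q) := by
    intro x hx
    have hx01 : x ∈ Set.Ioo (0:ℝ) 1 := ⟨lt_of_lt_of_le hp hx.1, lt_of_le_of_lt hx.2 hq⟩
    exact ((hder x hx01).continuousAt).continuousWithinAt
  have hmono : MonotoneOn g (Set.Icc p q) := by
    apply monotoneOn_of_deriv_nonneg (convex_Icc p q) hcont
    · intro x hx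
      rw [interior_Icc] at hx
      have hx01 : x ∈ Set.Ioo (0:ℝ) 1 := ⟨lt_trans hp hx.1, lt_trans hx.2 hq⟩
      exact ((hder x hx01).differentiableAt).differentiableWithinAt
    · intro x hx
      rw [interior_Icc] at hx
      have hx01 : x ∈ Set.Ioo (0:ℝ) 1 := ⟨lt_trans hp hx.1, lt_trans hx.2 hq⟩
      rw [(hder x hx01).deriv]
      have h0 : 0 < x := hx01.1
      have h1 : 0 < 1 - x := by linarith [hx01.2]
      have key : -(p/x) + (1-p)/(1-x) - 4*(x-p) = (x-p)*(1-2*x)^2 / (x*(1-x)) := by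
        field_simp; ring
      rw [key]
      have hxp : 0 ≤ x - p := by linarith [hx.1]
      positivity
  have h0 : g p = 0 := by simp [hg]
  have := hmono (Set.left_mem_Icc.mpr hpq.le) (Set.right_mem_Icc.mpr hpq.le) hpq.le
  rw [h0] at this
  have h2 : 0 ≤ p*(Real.log p - Real.log q) + (1-p)*(Real.log (1-p) - Real.log (1-q)) - 2*(q-p)^2 := this
  linarith

lemma my_bern_tail {Ω : Type*} [MeasurableSpace Ω] (μ : Measure Ω) [IsProbabilityMeasure μ]
    (n : ℕ) (hn : 1 ≤ n) (Y : Fin n → Ω → ℝ)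
    (hYmeas : ∀ s, Measurable (Y s))
    (hYind : iIndepFun Y μ)
    (hY01 : ∀ s ω, Y s ω = 0 ∨ Y s ω = 1)
    (q : ℝ) (hq : ∀ s, ∫ ω, Y s ω ∂μ = q)
    (p a : ℝ) (hp0 : 0 < p) (hp1 : p < 1) (ha : 0 < a)
    (hpa : p + a ≤ q ∨ q = 1) :
    μ {ω | ∑ s, Y s ω ≤ n * p} ≤ ENNReal.ofReal (Real.exp (-2 * n * a^2)) := by
  have hY0 : ∀ s ω, 0 ≤ Y s ω := fun s ω => by rcases hY01 s ω with h | h <;> simp [h]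
  have hY1 : ∀ s ω, Y s ω ≤ 1 := fun s ω => by rcases hY01 s ω with h | h <;> simp [h]
  have hInt : ∀ s, Integrable (Y s) μ := by
    intro s
    refine (integrable_const (1:ℝ)).mono' (hYmeas s).aestronglyMeasurable ?_
    filter_upwards with ω
    rw [Real.norm_eq_abs, abs_le]
    exact ⟨by linarith [hY0 s ω], hY1 s ω⟩
  have hN1 : (1:ℝ) ≤ (n:ℝ) := by exact_mod_cast hn
  by_cases hq1 : q = 1
  · -- degenerate case: all Y s = 1 a.s.
    have hae : ∀ s, ∀ᵐ ω ∂μ, Y s ω = 1 := by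
      intro s
      have hint2 : Integrable (fun ω => 1 - Y s ω) μ := (integrable_const 1).sub (hInt s)
      have hz : ∫ ω, (1 - Y s ω) ∂μ = 0 := by
        rw [integral_sub (integrable_const 1) (hInt s), hq s, hq1]
        simp
      have h0 := (integral_eq_zero_iff_of_nonneg
        (fun ω => by simp only [Pi.zero_apply, sub_nonneg]; exact hY1 s ω) hint2).mp hz
      filter_upwards [h0] with ω h
      have : 1 - Y s ω = 0 := h
      linarith
    have hall : ∀ᵐ ω ∂μ, ∀ s, Y s ω = 1 := ae_all_iff.mpr hae
    have hsub : {ω | ∑ s, Y s ω ≤ (n:ℝ) * p} ⊆ {ω | ¬ ∀ s, Y s ω = 1} := by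
      intro ω hω hωall
      have hs : ∑ s, Y s ω = (n:ℝ) := by
        simp [hωall]
      rw [Set.mem_setOf_eq, hs] at hω
      nlinarith
    refine le_trans (le_trans (measure_mono hsub) (le_of_eq (ae_iff.mp hall))) zero_le
  · have hpq : p + a ≤ q := hpa.resolve_right hq1
    have hq0 : 0 < q := by linarith
    have s0 : Fin n := ⟨0, by omega⟩
    have hqle : q ≤ 1 := by
      rw [← hq s0]
      calc ∫ ω, Y s0 ω ∂μ ≤ ∫ _, (1:ℝ) ∂μ := integral_mono (hInt s0) (integrable_const 1) (fun ω => hY1 s0 ω)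
        _ = 1 := by simp
    have hqlt : q < 1 := lt_of_le_of_ne hqle hq1
    have h1p : 0 < 1 - p := by linarith
    have h1q : 0 < 1 - q := by linarith
    have hplt : p < q := by linarith
    set t := Real.log (p * (1-q) / (q * (1-p))) with htdef
    have hfrac : 0 < p*(1-q)/(q*(1-p)) := by positivity
    have het : Real.exp t = p*(1-q)/(q*(1-p)) := Real.exp_log hfrac
    have htle : t ≤ 0 := by
      apply Real.log_nonpos hfrac.le
      rw [div_le_one (by positivity)]
      nlinarith
    have hmgf1 : ∀ s, mgf (Y s) μ t = 1 + (Real.exp t - 1) * q := by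
      intro s
      rw [mgf]
      have heq : (fun ω => Real.exp (t * Y s ω)) = fun ω => 1 + (Real.exp t - 1) * Y s ω := by
        funext ω
        rcases hY01 s ω with h | h
        · simp [h]
        · simp [h]
      rw [heq, integral_add (integrable_const 1) ((hInt s).const_mul _), integral_const_mul, hq s]
      simp
    have hSapp : ∀ ω, (∑ s, Y s) ω = ∑ s, Y s ω := fun ω => Finset.sum_apply ω Finset.univ Y
    have hSmeas : Measurable (∑ s, Y s) := by
      rw [show (∑ s, Y s) = fun ω => ∑ s, Y s ω from funext hSapp]
      exact Finset.measurable_sum _ (fun s _ => hYmeas s)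
    have hintexp : Integrable (fun ω => Real.exp (t * (∑ s, Y s) ω)) μ := by
      refine (integrable_const (1:ℝ)).mono' ((hSmeas.const_mul t).exp).aestronglyMeasurable ?_
      filter_upwards with ω
      rw [Real.norm_eq_abs, abs_of_pos (Real.exp_pos _), Real.exp_le_one_iff]
      apply mul_nonpos_of_nonpos_of_nonneg htle
      rw [hSapp]
      exact Finset.sum_nonneg fun s _ => hY0 s ω
    have hchernoff := measure_le_le_exp_mul_mgf (X := ∑ s, Y s) (μ := μ) ((n:ℝ)*p) htle hintexp
    have hmgfsum : mgf (∑ s, Y s) μ t = (1 + (Real.exp t - 1)*q)^n := by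
      rw [hYind.mgf_sum hYmeas Finset.univ, Finset.prod_congr rfl (fun s _ => hmgf1 s)]
      simp
    have hm : 1 + (Real.exp t - 1)*q = (1-q)/(1-p) := by
      rw [het]; field_simp; ring
    have hKL := my_pinsker hp0 hplt hqlt
    have hbound : Real.exp (-t*((n:ℝ)*p)) * (1 + (Real.exp t - 1)*q)^n ≤ Real.exp (-2*(n:ℝ)*a^2) := by
      rw [hm]
      have hdivpos : (0:ℝ) < (1-q)/(1-p) := by positivity
      have hpow : ((1-q)/(1-p) : ℝ)^n = Real.exp ((n:ℝ) * Real.log ((1-q)/(1-p))) := by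
        rw [Real.exp_nat_mul, Real.exp_log hdivpos]
      rw [hpow, ← Real.exp_add, Real.exp_le_exp]
      have hlogdiv : Real.log ((1-q)/(1-p)) = Real.log (1-q) - Real.log (1-p) :=
        Real.log_div h1q.ne' h1p.ne'
      have ht2 : t = Real.log p + Real.log (1-q) - (Real.log q + Real.log (1-p)) := by
        rw [htdef, Real.log_div (mul_pos hp0 h1q).ne' (mul_pos hq0 h1p).ne',
          Real.log_mul hp0.ne' h1q.ne', Real.log_mul hq0.ne' h1p.ne']
      have haq : 2*a^2 ≤ 2*(q-p)^2 := by nlinarith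
      have hK := mul_le_mul_of_nonneg_left (le_trans haq hKL) (show (0:ℝ) ≤ (n:ℝ) by linarith)
      rw [ht2, hlogdiv]
      nlinarith [hK]
    have hev : {ω | ∑ s, Y s ω ≤ (n:ℝ) * p} = {ω | (∑ s, Y s) ω ≤ (n:ℝ)*p} := by
      ext ω; rw [Set.mem_setOf_eq, Set.mem_setOf_eq, hSapp]
    rw [hev, ENNReal.le_ofReal_iff_toReal_le (measure_ne_top μ _) (Real.exp_pos _).le]
    calc (μ {ω | (∑ s, Y s) ω ≤ (n:ℝ)*p}).toReal
        ≤ Real.exp (-t*((n:ℝ)*p)) * mgf (∑ s, Y s) μ t := hchernoff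
      _ = Real.exp (-t*((n:ℝ)*p)) * (1 + (Real.exp t - 1)*q)^n := by rw [hmgfsum]
      _ ≤ Real.exp (-2*(n:ℝ)*a^2) := hbound

set_option maxHeartbeats 1000000 in
/-- **Bounded connected support implies the sub-Gaussian quantile estimation rate:
(A.9) ⇒ (A.10)** (Lemma S5 of the paper). -/
theorem bounded_support_implies_subgaussian_quantile_rate
    (n : ℕ) (hn : 1 ≤ n)
    (B c : ℝ) (hB : 0 < B) (hc : 0 < c)
    {Ω : Type*} [MeasurableSpace Ω] (μ : Measure Ω) [IsProbabilityMeasure μ]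
    (F f : ℝ → ℝ)
    (hFf : ∀ x : ℝ, F x = ∫ t in Set.Iic x, f t)
    (hf0 : ∀ x : ℝ, x ∉ Set.Icc (-B) B → f x = 0)
    (hfc : ∀ x ∈ Set.Icc (-B) B, c ≤ f x)
    (p : ℝ) (hp : p ∈ Set.Ioo (0:ℝ) 1)
    (Finv : ℝ) (hFinv : Finv = sInf {x : ℝ | p ≤ F x})
    (hstrict : ∃ δ > (0:ℝ), StrictMonoOn F (Set.Ioo (Finv - δ) (Finv + δ)))
    (X : Fin n → Ω → ℝ)
    (hXmeas : ∀ s, Measurable (X s))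
    (hXindep : iIndepFun X μ)
    (hXlaw : ∀ s (x : ℝ), (μ {ω | X s ω ≤ x}).toReal = F x)
    (Fhatinv : Ω → ℝ)
    (hFhatinv : ∀ ω, Fhatinv ω =
      sInf {x : ℝ | p ≤ (1 / (n : ℝ)) * ∑ s, if X s ω ≤ x then (1:ℝ) else 0})
    (ε : ℝ) (hε : 0 < ε) :
    μ {ω | ε < |Fhatinv ω - Finv|} ≤
      ENNReal.ofReal (2 * Real.exp (-2 * n * c ^ 2 * ε ^ 2)) := by
  obtain ⟨hp0, hp1⟩ := hp
  have hn0 : (0:ℝ) < n := by exact_mod_cast Nat.lt_of_lt_of_le Nat.zero_lt_one hn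
  have s0 : Fin n := ⟨0, by omega⟩
  -- basic facts about F
  have hFmono : Monotone F := by
    intro x y hxy
    rw [← hXlaw s0 x, ← hXlaw s0 y]
    exact ENNReal.toReal_mono (measure_ne_top μ _)
      (measure_mono (fun ω h => le_trans h hxy))
  have hF0le : ∀ x, 0 ≤ F x := fun x => by rw [← hXlaw s0 x]; exact ENNReal.toReal_nonneg
  -- limit at +∞ via monotone union of sets
  set A : ℕ → Set Ω := fun k => {ω | X s0 ω ≤ (k:ℝ)} with hA
  have hAmono : Monotone A := by
    intro i j hij ω h
    simp only [hA, Set.mem_setOf_eq] at h ⊢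
    exact le_trans h (by exact_mod_cast hij)
  have hAunion : (⋃ k, A k) = Set.univ := by
    ext ω
    simp only [Set.mem_iUnion, Set.mem_univ, iff_true, hA, Set.mem_setOf_eq]
    exact ⟨⌈X s0 ω⌉₊, Nat.le_ceil _⟩
  have htend : Filter.Tendsto (fun k => μ (A k)) Filter.atTop (nhds 1) := by
    have := tendsto_measure_iUnion_atTop (μ := μ) hAmono
    rwa [hAunion, measure_univ] at this
  have hofp1 : ENNReal.ofReal p < 1 := by
    rw [← ENNReal.ofReal_one]
    exact (ENNReal.ofReal_lt_ofReal_iff one_pos).mpr hp1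
  obtain ⟨K0, hK0⟩ := (Filter.eventually_atTop).mp (htend.eventually (eventually_gt_nhds hofp1))
  obtain ⟨K1, hK1⟩ := exists_nat_ge B
  set K : ℕ := max K0 K1 with hKdef
  have hKB : B ≤ (K:ℝ) := le_trans hK1 (by exact_mod_cast le_max_right K0 K1)
  have hKp : p < F (K:ℝ) := by
    rw [← hXlaw s0 (K:ℝ)]
    have h := hK0 K (le_max_left K0 K1)
    exact (ENNReal.ofReal_lt_iff_lt_toReal hp0.le (measure_ne_top μ _)).mp h
  -- integrability of f
  have hIntIic : IntegrableOn f (Set.Iic (K:ℝ)) := by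
    by_contra h
    have h0 : F (K:ℝ) = 0 := by rw [hFf]; exact integral_undef h
    rw [h0] at hKp; linarith
  have hfint : Integrable f := by
    rw [← integrableOn_univ, ← Set.Iic_union_Ioi (a := (K:ℝ))]
    refine hIntIic.union ?_
    rw [integrableOn_congr_fun (g := fun _ => (0:ℝ)) ?_ measurableSet_Ioi]
    · exact integrableOn_zero
    · intro x hx
      exact hf0 x (fun hm => absurd hm.2 (not_le.mpr (lt_of_le_of_lt hKB hx)))
  have hIic : ∀ x : ℝ, IntegrableOn f (Set.Iic x) := fun x => hfint.integrableOn
  -- increments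
  have hInc : ∀ a b : ℝ, -B ≤ a → b ≤ B → a ≤ b → F a + c*(b-a) ≤ F b := by
    intro a b haB hbB hab
    have hIoc : F b - F a = ∫ x in Set.Ioc a b, f x := by
      rw [hFf, hFf, intervalIntegral.integral_Iic_sub_Iic (hIic a) (hIic b),
        intervalIntegral.integral_of_le hab]
    have hcb : ∫ _x in Set.Ioc a b, (c:ℝ) ≤ ∫ x in Set.Ioc a b, f x := by
      apply setIntegral_mono_on
      · exact integrableOn_const (by rw [Real.volume_Ioc]; exact ENNReal.ofReal_ne_top)
      · exact hfint.integrableOn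
      · exact measurableSet_Ioc
      · intro x hx
        exact hfc x ⟨le_trans haB hx.1.le, le_trans hx.2 hbB⟩
    have hconst : ∫ _x in Set.Ioc a b, (c:ℝ) = (b - a) * c := by
      rw [setIntegral_const, measureReal_def, Real.volume_Ioc, ENNReal.toReal_ofReal (by linarith)]
      simp [smul_eq_mul]
    nlinarith
  have hF0 : ∀ x : ℝ, x < -B → F x = 0 := by
    intro x hx
    rw [hFf, setIntegral_congr_fun (g := fun _ => (0:ℝ)) measurableSet_Iic ?_, integral_zero]
    intro t ht
    exact hf0 t (fun hm => absurd hm.1 (not_le.mpr (lt_of_le_of_lt ht hx)))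
  have hFBc : ∀ x : ℝ, B ≤ x → F x = F B := by
    intro x hx
    have h := intervalIntegral.integral_Iic_sub_Iic (μ := volume) (f := f) (hIic B) (hIic x)
    rw [intervalIntegral.integral_of_le hx] at h
    have hz : ∫ t in Set.Ioc B x, f t = 0 := by
      rw [setIntegral_congr_fun (g := fun _ => (0:ℝ)) measurableSet_Ioc ?_, integral_zero]
      intro t ht
      exact hf0 t (fun hm => absurd hm.2 (not_le.mpr ht.1))
    rw [hz] at h
    rw [hFf x, hFf B]
    linarith
  have hFB1 : F B = 1 := by
    have hev : ∀ᶠ k : ℕ in Filter.atTop, μ (A k) = ENNReal.ofReal (F B) := by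
      filter_upwards [Filter.eventually_ge_atTop ⌈B⌉₊] with k hk
      have hBk : B ≤ (k:ℝ) := le_trans (Nat.le_ceil B) (by exact_mod_cast hk)
      have h1 : (μ (A k)).toReal = F B := by rw [hXlaw s0]; exact hFBc _ hBk
      rw [← h1, ENNReal.ofReal_toReal (measure_ne_top μ _)]
    have h2 : Filter.Tendsto (fun k => μ (A k)) Filter.atTop (nhds (ENNReal.ofReal (F B))) :=
      Filter.Tendsto.congr' (by filter_upwards [hev] with k h; exact h.symm) tendsto_const_nhds
    have h3 := tendsto_nhds_unique h2 htend
    have := congrArg ENNReal.toReal h3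
    rwa [ENNReal.toReal_ofReal (hF0le B), ENNReal.toReal_one] at this
  -- quantile location
  set S : Set ℝ := {x : ℝ | p ≤ F x} with hS
  have hBS : B ∈ S := by rw [hS, Set.mem_setOf_eq, hFB1]; exact hp1.le
  have hSne : S.Nonempty := ⟨B, hBS⟩
  have hlb : ∀ x ∈ S, -B ≤ x := by
    intro x hx
    by_contra h
    push_neg at h
    rw [hS, Set.mem_setOf_eq, hF0 x h] at hx
    linarith
  have hSbdd : BddBelow S := ⟨-B, fun x hx => hlb x hx⟩
  have hFinv_ge : -B ≤ Finv := by rw [hFinv]; exact le_csInf hSne hlb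
  have hFinv_le : Finv ≤ B := by rw [hFinv]; exact csInf_le hSbdd hBS
  have hcε : 0 < c * ε := mul_pos hc hε
  -- bound on F at Finv + ε
  have hFt1 : p + c*ε ≤ F (Finv + ε) ∨ F (Finv + ε) = 1 := by
    by_cases ht1B : Finv + ε ≤ B
    · left
      apply le_of_forall_pos_le_add
      intro η hη
      set δ : ℝ := min ε (η/c) with hδ
      have hδpos : 0 < δ := lt_min hε (div_pos hη hc)
      have hδε : δ ≤ ε := min_le_left _ _
      have hδη : c*δ ≤ η := by
        calc c*δ ≤ c*(η/c) := mul_le_mul_of_nonneg_left (min_le_right _ _) hc.le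
          _ = η := by field_simp
      obtain ⟨s', hs'S, hs'lt⟩ := (csInf_lt_iff hSbdd hSne).mp
        (show sInf S < Finv + δ by rw [← hFinv]; linarith)
      have h1 : p ≤ F (Finv + δ) := le_trans hs'S (hFmono hs'lt.le)
      have h2 := hInc (Finv + δ) (Finv + ε) (by linarith) ht1B (by linarith)
      nlinarith
    · right
      rw [hFBc (Finv + ε) (le_of_not_ge ht1B)]
      exact hFB1
  -- bound on F at Finv - ε
  have hFt2 : F (Finv - ε) + c*ε ≤ p ∨ F (Finv - ε) = 0 := by
    by_cases ht2B : -B ≤ Finv - ε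
    · left
      apply le_of_forall_pos_le_add
      intro η hη
      set δ : ℝ := min ε (η/c) with hδ
      have hδpos : 0 < δ := lt_min hε (div_pos hη hc)
      have hδε : δ ≤ ε := min_le_left _ _
      have hδη : c*δ ≤ η := by
        calc c*δ ≤ c*(η/c) := mul_le_mul_of_nonneg_left (min_le_right _ _) hc.le
          _ = η := by field_simp
      have hnot : Finv - δ ∉ S := by
        intro hmem
        have := csInf_le hSbdd hmem
        rw [← hFinv] at this
        linarith
      have h1 : F (Finv - δ) < p := lt_of_not_ge hnot
      have h2 := hInc (Finv - ε) (Finv - δ) ht2B (by linarith) (by linarith)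
      nlinarith
    · right
      exact hF0 _ (by push_neg at ht2B; linarith)
  -- empirical indicator variables
  set g1 : ℝ → ℝ := fun x => if x ≤ Finv + ε then 1 else 0 with hg1
  set g2 : ℝ → ℝ := fun x => if x ≤ Finv - ε then 0 else 1 with hg2
  set Y1 : Fin n → Ω → ℝ := fun s => g1 ∘ X s with hY1
  set Y2 : Fin n → Ω → ℝ := fun s => g2 ∘ X s with hY2
  have hg1m : Measurable g1 := Measurable.ite measurableSet_Iic measurable_const measurable_const
  have hg2m : Measurable g2 := Measurable.ite measurableSet_Iic measurable_const measurable_const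
  have hY1meas : ∀ s, Measurable (Y1 s) := fun s => hg1m.comp (hXmeas s)
  have hY2meas : ∀ s, Measurable (Y2 s) := fun s => hg2m.comp (hXmeas s)
  have hY1ind : iIndepFun Y1 μ := hXindep.comp (fun _ => g1) (fun _ => hg1m)
  have hY2ind : iIndepFun Y2 μ := hXindep.comp (fun _ => g2) (fun _ => hg2m)
  have hY101 : ∀ s ω, Y1 s ω = 0 ∨ Y1 s ω = 1 := by
    intro s ω
    by_cases h : X s ω ≤ Finv + ε <;> simp [hY1, hg1, Function.comp, h]
  have hY201 : ∀ s ω, Y2 s ω = 0 ∨ Y2 s ω = 1 := by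
    intro s ω
    by_cases h : X s ω ≤ Finv - ε <;> simp [hY2, hg2, Function.comp, h]
  have hmeasset : ∀ (s : Fin n) (x : ℝ), MeasurableSet {ω | X s ω ≤ x} :=
    fun s x => (hXmeas s) measurableSet_Iic
  have hindint : ∀ (s : Fin n) (x : ℝ),
      ∫ ω, (if X s ω ≤ x then (1:ℝ) else 0) ∂μ = F x := by
    intro s x
    have heq : (fun ω => if X s ω ≤ x then (1:ℝ) else 0)
        = Set.indicator {ω | X s ω ≤ x} (fun _ => (1:ℝ)) := by
      funext ω
      by_cases h : X s ω ≤ x <;> simp [Set.indicator_apply, h]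
    rw [heq, integral_indicator (hmeasset s x), setIntegral_const, smul_eq_mul, mul_one, measureReal_def, hXlaw]
  have hY1mean : ∀ s, ∫ ω, Y1 s ω ∂μ = F (Finv + ε) := fun s => hindint s (Finv + ε)
  have hindint2 : ∀ (s : Fin n), Integrable (fun ω => if X s ω ≤ Finv - ε then (1:ℝ) else 0) μ := by
    intro s
    refine (integrable_const (1:ℝ)).mono'
      ((measurable_const.ite (hmeasset s (Finv - ε)) measurable_const).aestronglyMeasurable) ?_
    filter_upwards with ω
    by_cases h : X s ω ≤ Finv - ε <;> simp [h]
  have hY2mean : ∀ s, ∫ ω, Y2 s ω ∂μ = 1 - F (Finv - ε) := by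
    intro s
    have heq : (fun ω => Y2 s ω) = fun ω => 1 - (if X s ω ≤ Finv - ε then (1:ℝ) else 0) := by
      funext ω
      by_cases h : X s ω ≤ Finv - ε <;> simp [hY2, hg2, Function.comp, h]
    calc ∫ ω, Y2 s ω ∂μ = ∫ ω, (1 - (if X s ω ≤ Finv - ε then (1:ℝ) else 0)) ∂μ := by rw [← heq]
      _ = 1 - F (Finv - ε) := by
          rw [integral_sub (integrable_const 1) (hindint2 s), hindint s]
          simp
  -- event inclusion
  set E1 : Set Ω := {ω | ∑ s, Y1 s ω ≤ (n:ℝ) * p} with hE1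
  set E2 : Set Ω := {ω | ∑ s, Y2 s ω ≤ (n:ℝ) * (1 - p)} with hE2
  have hsub : {ω | ε < |Fhatinv ω - Finv|} ⊆ E1 ∪ E2 := by
    intro ω hω
    set Sω : Set ℝ := {x : ℝ | p ≤ (1 / (n : ℝ)) * ∑ s, if X s ω ≤ x then (1:ℝ) else 0} with hSω
    obtain ⟨x₀, hx₀⟩ := Finite.exists_le (fun s => X s ω)
    have hx₀S : x₀ ∈ Sω := by
      rw [hSω, Set.mem_setOf_eq]
      have : ∀ s : Fin n, (if X s ω ≤ x₀ then (1:ℝ) else 0) = 1 := fun s => if_pos (hx₀ s)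
      rw [Finset.sum_congr rfl (fun s _ => this s)]
      simp only [Finset.sum_const, Finset.card_univ, Fintype.card_fin, nsmul_eq_mul, mul_one]
      rw [one_div, inv_mul_cancel₀ (ne_of_gt hn0)]
      exact hp1.le
    have hSωne : Sω.Nonempty := ⟨x₀, hx₀S⟩
    obtain ⟨m, hm⟩ := Finite.exists_le (fun s => -(X s ω))
    have hSωbdd : BddBelow Sω := by
      refine ⟨-m, fun y hy => ?_⟩
      by_contra hcon
      push_neg at hcon
      have hall : ∀ s : Fin n, (if X s ω ≤ y then (1:ℝ) else 0) = 0 := by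
        intro s
        rw [if_neg]
        have := hm s
        push_neg
        linarith
      rw [hSω, Set.mem_setOf_eq, Finset.sum_congr rfl (fun s _ => hall s)] at hy
      simp at hy
      linarith
    rw [Set.mem_setOf_eq, lt_abs] at hω
    rcases hω with hω | hω
    · -- Fhatinv ω > Finv + ε
      left
      rw [hE1, Set.mem_setOf_eq]
      by_contra hcon
      push_neg at hcon
      have ht1mem : Finv + ε ∈ Sω := by
        rw [hSω, Set.mem_setOf_eq]
        have hsum : ∑ s, (if X s ω ≤ Finv + ε then (1:ℝ) else 0) = ∑ s, Y1 s ω := by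
          apply Finset.sum_congr rfl
          intro s _
          simp [hY1, hg1, Function.comp]
        rw [hsum, one_div_mul_eq_div, le_div_iff₀ hn0, mul_comm]
        linarith
      have := csInf_le hSωbdd ht1mem
      rw [← hFhatinv ω] at this
      linarith
    · -- Fhatinv ω < Finv - ε
      right
      rw [hE2, Set.mem_setOf_eq]
      have hex : ∃ y ∈ Sω, y < Finv - ε := by
        by_contra hcon
        push_neg at hcon
        have := le_csInf hSωne hcon
        rw [← hFhatinv ω] at this
        linarith
      obtain ⟨y, hyS, hylt⟩ := hex
      rw [hSω, Set.mem_setOf_eq] at hyS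
      have hmono : ∑ s, (if X s ω ≤ y then (1:ℝ) else 0)
          ≤ ∑ s, (if X s ω ≤ Finv - ε then (1:ℝ) else 0) := by
        apply Finset.sum_le_sum
        intro s _
        by_cases h : X s ω ≤ y
        · rw [if_pos h, if_pos (le_trans h hylt.le)]
        · rw [if_neg h]
          by_cases h2 : X s ω ≤ Finv - ε <;> simp [h2]
      have hflip : ∑ s, Y2 s ω = (n:ℝ) - ∑ s, (if X s ω ≤ Finv - ε then (1:ℝ) else 0) := by
        have : ∀ s : Fin n, Y2 s ω = 1 - (if X s ω ≤ Finv - ε then (1:ℝ) else 0) := by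
          intro s
          by_cases h : X s ω ≤ Finv - ε <;> simp [hY2, hg2, Function.comp, h]
        rw [Finset.sum_congr rfl (fun s _ => this s), Finset.sum_sub_distrib]
        simp
      have hnp : (n:ℝ) * p ≤ ∑ s, (if X s ω ≤ Finv - ε then (1:ℝ) else 0) := by
        have h3 : p * n ≤ ∑ s, (if X s ω ≤ y then (1:ℝ) else 0) := by
          rw [one_div_mul_eq_div, le_div_iff₀ hn0] at hyS
          linarith
        rw [mul_comm]
        linarith [hmono]
      rw [hflip, mul_one_sub]
      linarith
  -- apply the tail bounds
  have hb1 : μ E1 ≤ ENNReal.ofReal (Real.exp (-2 * n * (c*ε)^2)) :=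
    my_bern_tail μ n hn Y1 hY1meas hY1ind hY101 (F (Finv + ε)) hY1mean p (c*ε) hp0 hp1 hcε hFt1
  have hb2 : μ E2 ≤ ENNReal.ofReal (Real.exp (-2 * n * (c*ε)^2)) :=
    my_bern_tail μ n hn Y2 hY2meas hY2ind hY201 (1 - F (Finv - ε)) hY2mean (1-p) (c*ε)
      (by linarith) (by linarith) hcε
      (by rcases hFt2 with h | h
          · left; linarith
          · right; rw [h]; ring)
  have hexp : Real.exp (-2 * n * (c*ε)^2) = Real.exp (-2 * n * c^2 * ε^2) := by ring_nf
  calc μ {ω | ε < |Fhatinv ω - Finv|} ≤ μ (E1 ∪ E2) := measure_mono hsub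
    _ ≤ μ E1 + μ E2 := measure_union_le _ _
    _ ≤ ENNReal.ofReal (Real.exp (-2 * n * (c*ε)^2)) + ENNReal.ofReal (Real.exp (-2 * n * (c*ε)^2)) :=
        add_le_add hb1 hb2
    _ = ENNReal.ofReal (2 * Real.exp (-2 * n * c ^ 2 * ε ^ 2)) := by
        rw [← ENNReal.ofReal_add (Real.exp_pos _).le (Real.exp_pos _).le, hexp]
        ring_nf
end
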